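/- arXiv:1507.02946 — 2 statements merged into one kernel-verified Lean document; each statement's English description precedes it below -/
import Mathlib

section
/- Fix n ≥ 1. Let k₀ be a subfield of a field k of characteristic p > 0. If every strong Keller map in ME_n(k) is invertible over k, then every strong Keller map in ME_n(k₀) is invertible over k₀. -/
open MvPolynomial

noncomputable section

/-- The total degree `|α|` of a multi-index `α`. -/
def mdeg {n : ℕ} (α : Fin n →₀ ℕ) : ℕ := α.sum fun _ e => e

/-- The determinant of the Jacobian matrix `(∂F_i/∂x_j)` of a polynomial endomorphism. -/
def jacDet {n : ℕ} {R : Type*} [CommRing R] (F : Fin n → MvPolynomial (Fin n) R) :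
    MvPolynomial (Fin n) R :=
  (Matrix.of fun i j => MvPolynomial.pderiv j (F i)).det

/-- `F` has degree at most `d`. -/
def DegLE {n : ℕ} {R : Type*} [CommRing R] (F : Fin n → MvPolynomial (Fin n) R) (d : ℕ) : Prop :=
  ∀ i, (F i).totalDegree ≤ d

/-- `F` has affine part the identity: `F_i = x_i + (terms of degree ≥ 2)`. -/
def AffinePartId {n : ℕ} {R : Type*} [CommRing R] (F : Fin n → MvPolynomial (Fin n) R) : Prop :=
  ∀ (i : Fin n) (α : Fin n →₀ ℕ), mdeg α ≤ 1 →
    MvPolynomial.coeff α (F i) = MvPolynomial.coeff α (MvPolynomial.X i : MvPolynomial (Fin n) R)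

/-- `F` is an invertible polynomial map: there is `G` with `F∘G = G∘F = id`. -/
def IsInvertible {n : ℕ} {R : Type*} [CommRing R] (F : Fin n → MvPolynomial (Fin n) R) : Prop :=
  ∃ G : Fin n → MvPolynomial (Fin n) R,
    (∀ i, MvPolynomial.bind₁ G (F i) = MvPolynomial.X i) ∧
    (∀ i, MvPolynomial.bind₁ F (G i) = MvPolynomial.X i)

/-- Index type of the universal coefficients `c_{i,α}`, `1 ≤ i ≤ n`, `2 ≤ |α| ≤ d`. -/
abbrev Idx (n d : ℕ) : Type := Fin n × {α : Fin n →₀ ℕ // 2 ≤ mdeg α ∧ mdeg α ≤ d}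

/-- The finite set of multi-indices `α` with `2 ≤ |α| ≤ d`. -/
def midxSet (n d : ℕ) : Finset (Fin n →₀ ℕ) :=
  (Finset.Iic (Finsupp.equivFunOnFinite.symm fun _ : Fin n => d)).filter
    fun α => 2 ≤ mdeg α ∧ mdeg α ≤ d

/-- The universal degree-`d` endomorphism with affine part identity, written over
`C_{ℤ,d} = ℤ[c_{i,α}]`. -/
def univFZ (n d : ℕ) : Fin n → MvPolynomial (Fin n) (MvPolynomial (Idx n d) ℤ) :=
  fun i => MvPolynomial.X i +
    ∑ α ∈ (midxSet n d).attach,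
      MvPolynomial.monomial (α : Fin n →₀ ℕ)
        (MvPolynomial.X (⟨i, ⟨α.1, by
          have h := α.2
          simp only [midxSet, Finset.mem_filter] at h
          exact h.2⟩⟩ : Idx n d))

/-- The coefficients `E_β ∈ C_{ℤ,d}` of `det(Jac(F[d])) − 1 = Σ_β E_β x^β`. -/
def Ecoef (n d : ℕ) (β : Fin n →₀ ℕ) : MvPolynomial (Idx n d) ℤ :=
  MvPolynomial.coeff β (jacDet (univFZ n d) - 1)

/-- The inclusion `C_{ℤ,d} → C_{ℚ,d}`. -/
def toQ (n d : ℕ) : MvPolynomial (Idx n d) ℤ →+* MvPolynomial (Idx n d) ℚ :=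
  MvPolynomial.map (Int.castRingHom ℚ)

/-- The ideal `I_ℚ^d ⊆ C_{ℚ,d}` generated by the coefficients `E_β`. -/
def Iqd (n d : ℕ) : Ideal (MvPolynomial (Idx n d) ℚ) :=
  Ideal.span (Set.range fun β : Fin n →₀ ℕ => toQ n d (Ecoef n d β))

/-- `J_ℤ^d := rad(I_ℚ^d) ∩ C_{ℤ,d}` as the contraction of the radical to `C_{ℤ,d}`. -/
def Jzd (n d : ℕ) : Ideal (MvPolynomial (Idx n d) ℤ) :=
  Ideal.comap (toQ n d) (Iqd n d).radical

/-- `ψ_F : C_{ℤ,d} → R`, evaluating `c_{i,α}` at the coefficient of `x^α` in `F_i`. -/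
def psi {n : ℕ} (d : ℕ) {R : Type*} [CommRing R] (F : Fin n → MvPolynomial (Fin n) R) :
    MvPolynomial (Idx n d) ℤ →+* R :=
  MvPolynomial.eval₂Hom (Int.castRingHom R) fun v => MvPolynomial.coeff v.2.1 (F v.1)

/-- `F` is a strong Keller map (w.r.t. degree bound `d`): `ψ_F` vanishes on `J_ℤ^d`. -/
def IsSKE (n d : ℕ) {R : Type*} [CommRing R] (F : Fin n → MvPolynomial (Fin n) R) : Prop :=
  ∀ Q ∈ Jzd n d, psi d F Q = 0

/-- `F` is a strong Keller map: for some degree bound `d ≥ 2` of `F`,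
`ψ_F` vanishes on `J_ℤ^d`. -/
def IsSKEAll (n : ℕ) {R : Type*} [CommRing R] (F : Fin n → MvPolynomial (Fin n) R) : Prop :=
  ∃ d, 2 ≤ d ∧ DegLE F d ∧ IsSKE n d F



section DescentAux

variable {n : ℕ} {R : Type*} [CommRing R]

lemma mdeg_add (a b : Fin n →₀ ℕ) : mdeg (a + b) = mdeg a + mdeg b :=
  Finsupp.sum_add_index' (fun _ => rfl) (fun _ _ _ => rfl)

lemma mdeg_eq_zero {a : Fin n →₀ ℕ} (h : mdeg a = 0) : a = 0 := by
  rw [mdeg, Finsupp.sum] at h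
  ext i
  by_cases hi : i ∈ a.support
  · exact Finset.sum_eq_zero_iff.mp h i hi
  · simpa using Finsupp.notMem_support_iff.mp hi

/-- `q` has no terms of (multi)degree `< t`. -/
def Van (q : MvPolynomial (Fin n) R) (t : ℕ) : Prop :=
  ∀ β : Fin n →₀ ℕ, mdeg β < t → MvPolynomial.coeff β q = 0

lemma Van.mono {q : MvPolynomial (Fin n) R} {s t : ℕ} (h : Van q s) (hts : t ≤ s) : Van q t :=
  fun β hβ => h β (lt_of_lt_of_le hβ hts)

lemma Van_zero_poly (t : ℕ) : Van (0 : MvPolynomial (Fin n) R) t := fun β _ => by simp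

lemma Van_add {q r : MvPolynomial (Fin n) R} {t : ℕ} (hq : Van q t) (hr : Van r t) :
    Van (q + r) t := fun β hβ => by
  rw [MvPolynomial.coeff_add, hq β hβ, hr β hβ, add_zero]

lemma Van_neg {q : MvPolynomial (Fin n) R} {t : ℕ} (hq : Van q t) : Van (-q) t := fun β hβ => by
  rw [MvPolynomial.coeff_neg, hq β hβ, neg_zero]

lemma Van_mul {q r : MvPolynomial (Fin n) R} {s t : ℕ} (hq : Van q s) (hr : Van r t) :
    Van (q * r) (s + t) := by
  intro β hβ
  rw [MvPolynomial.coeff_mul]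
  refine Finset.sum_eq_zero ?_
  rintro ⟨γ, δ⟩ hmem
  rw [Finset.HasAntidiagonal.mem_antidiagonal] at hmem
  have hsum : mdeg γ + mdeg δ < s + t := by
    rw [← mdeg_add, hmem]; exact hβ
  rcases (by omega : mdeg γ < s ∨ mdeg δ < t) with h | h
  · rw [hq γ h, zero_mul]
  · rw [hr δ h, mul_zero]

lemma Van_pow {q : MvPolynomial (Fin n) R} (hq : Van q 1) : ∀ a : ℕ, Van (q ^ a) a
  | 0 => fun β hβ => absurd hβ (Nat.not_lt_zero _)
  | a + 1 => by
    rw [pow_succ]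
    exact Van_mul (Van_pow hq a) hq

lemma Van_C_mul {q : MvPolynomial (Fin n) R} {t : ℕ} (c : R) (hq : Van q t) :
    Van (MvPolynomial.C c * q) t := fun β hβ => by
  rw [MvPolynomial.coeff_C_mul, hq β hβ, mul_zero]

lemma Van_sum {ι : Type*} (s : Finset ι) (f : ι → MvPolynomial (Fin n) R) (t : ℕ)
    (hf : ∀ i ∈ s, Van (f i) t) : Van (∑ i ∈ s, f i) t := fun β hβ => by
  rw [MvPolynomial.coeff_sum]
  exact Finset.sum_eq_zero fun i hi => hf i hi β hβ

lemma Van_prod {ι : Type*} (s : Finset ι) (f : ι → MvPolynomial (Fin n) R) (e : ι → ℕ)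
    (hf : ∀ j, Van (f j) (e j)) : Van (∏ j ∈ s, f j) (∑ j ∈ s, e j) := by
  classical
  induction s using Finset.induction_on with
  | empty =>
    simp only [Finset.prod_empty, Finset.sum_empty]
    exact fun β hβ => absurd hβ (Nat.not_lt_zero _)
  | @insert a s ha ih =>
    rw [Finset.prod_insert ha, Finset.sum_insert ha]
    exact Van_mul (hf a) ih

lemma Van_pow_sub_pow {q r : MvPolynomial (Fin n) R} {m : ℕ} (hq : Van q 1) (hr : Van r 1)
    (hqr : Van (q - r) (m + 1)) : ∀ a : ℕ, Van (q ^ a - r ^ a) (m + a)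
  | 0 => by
    simp only [pow_zero, sub_self]
    exact Van_zero_poly _
  | a + 1 => by
    have heq : q ^ (a + 1) - r ^ (a + 1) = q * (q ^ a - r ^ a) + (q - r) * r ^ a := by ring
    rw [heq]
    exact Van_add ((Van_mul hq (Van_pow_sub_pow hq hr hqr a)).mono (by omega))
      ((Van_mul hqr (Van_pow hr a)).mono (by omega))

lemma Van_prod_sub_prod {ι : Type*} (s : Finset ι) (f g : ι → MvPolynomial (Fin n) R)
    (e : ι → ℕ) (m : ℕ) (hf : ∀ j, Van (f j) (e j)) (hg : ∀ j, Van (g j) (e j))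
    (hfg : ∀ j, Van (f j - g j) (m + e j)) :
    Van (∏ j ∈ s, f j - ∏ j ∈ s, g j) (m + ∑ j ∈ s, e j) := by
  classical
  induction s using Finset.induction_on with
  | empty =>
    simp only [Finset.prod_empty, Finset.sum_empty, sub_self]
    exact Van_zero_poly _
  | @insert a s ha ih =>
    rw [Finset.prod_insert ha, Finset.prod_insert ha, Finset.sum_insert ha]
    have heq : f a * ∏ j ∈ s, f j - g a * ∏ j ∈ s, g j
        = f a * (∏ j ∈ s, f j - ∏ j ∈ s, g j) + (f a - g a) * ∏ j ∈ s, g j := by ring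
    rw [heq]
    exact Van_add ((Van_mul (hf a) ih).mono (by omega))
      ((Van_mul (hfg a) (Van_prod s g e hg)).mono (by omega))

lemma Van_bind_sub (P : MvPolynomial (Fin n) R) (hP : Van P 2)
    (A B : Fin n → MvPolynomial (Fin n) R) (hA : ∀ j, Van (A j) 1) (hB : ∀ j, Van (B j) 1)
    (m : ℕ) (hAB : ∀ j, Van (A j - B j) (m + 1)) :
    Van (MvPolynomial.bind₁ A P - MvPolynomial.bind₁ B P) (m + 2) := by
  have hPsum : P = ∑ α ∈ P.support, MvPolynomial.monomial α (MvPolynomial.coeff α P) :=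
    (MvPolynomial.support_sum_monomial_coeff P).symm
  rw [hPsum, map_sum, map_sum, ← Finset.sum_sub_distrib]
  refine Van_sum _ _ _ fun α hα => ?_
  rw [MvPolynomial.bind₁_monomial, MvPolynomial.bind₁_monomial, ← mul_sub]
  have h2 : 2 ≤ mdeg α := by
    by_contra h
    exact (MvPolynomial.mem_support_iff.mp hα) (hP α (by omega))
  have hs : mdeg α = ∑ j ∈ α.support, α j := rfl
  refine Van.mono ?_ (by omega : m + 2 ≤ m + mdeg α)
  refine Van_C_mul _ ?_
  rw [hs]
  exact Van_prod_sub_prod α.support _ _ _ m (fun j => Van_pow (hA j) (α j))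
    (fun j => Van_pow (hB j) (α j)) (fun j => Van_pow_sub_pow (hA j) (hB j) (hAB j) (α j))

end DescentAux

/-- If every strong Keller map over a field `k` of characteristic `p > 0`
is invertible, then the same holds over any subfield `k₀` of `k` (given by an embedding
`φ : k₀ →+* k`). -/
theorem jc_descends_to_subfield (n p : ℕ) (hn : 1 ≤ n) (hp : p ≠ 0)
    (k₀ k : Type*) [Field k₀] [Field k] [CharP k₀ p] [CharP k p] (φ : k₀ →+* k)
    (H : ∀ F : Fin n → MvPolynomial (Fin n) k,
      AffinePartId F → IsSKEAll n F → IsInvertible F) :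
    ∀ F : Fin n → MvPolynomial (Fin n) k₀,
      AffinePartId F → IsSKEAll n F → IsInvertible F := by
  intro F hAff hSKE
  classical
  set F' : Fin n → MvPolynomial (Fin n) k := fun i => MvPolynomial.map φ (F i) with hF'def
  have hcoeff' : ∀ (i : Fin n) (β : Fin n →₀ ℕ), coeff β (F' i) = φ (coeff β (F i)) :=
    fun i β => coeff_map φ (F i) β
  have hAff' : AffinePartId F' := by
    intro i α hα
    rw [hcoeff' i α, hAff i α hα, coeff_X', coeff_X']
    split <;> simp
  have hSKE' : IsSKEAll n F' := by
    obtain ⟨d, hd2, hdeg, hske⟩ := hSKE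
    refine ⟨d, hd2, ?_, ?_⟩
    · intro i
      refine le_trans ?_ (hdeg i)
      exact Finset.sup_mono (MvPolynomial.support_map_subset _ _)
    · intro Q hQ
      have hcomp : psi d F' Q = φ (psi d F Q) := by
        simp only [psi, coe_eval₂Hom, eval₂_comp_left]
        congr 1
        · exact RingHom.ext_int _ _
      rw [hcomp, hske Q hQ, map_zero]
  obtain ⟨G', hGF', hFG'⟩ := H F' hAff' hSKE'
  -- constant coefficients vanish
  have hF'c : ∀ i, constantCoeff (F' i) = 0 := by
    intro i
    have h := hAff' i 0 (by simp [mdeg])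
    rw [coeff_zero_X] at h
    rw [show (constantCoeff : MvPolynomial (Fin n) k → k) = coeff 0 from constantCoeff_eq]
    exact h
  have hG'0 : ∀ j, coeff 0 (G' j) = 0 := by
    intro j
    have h := congrArg (MvPolynomial.aeval (fun _ => (0 : k))) (hFG' j)
    rw [aeval_bind₁] at h
    simp only [aeval_zero', hF'c, map_zero, aeval_X] at h
    rw [show coeff (0 : Fin n →₀ ℕ) (G' j) = constantCoeff (G' j) from
      (congrFun constantCoeff_eq (G' j)).symm]
    simpa using h
  have hVanG'1 : ∀ j, Van (G' j) 1 := by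
    intro j β hβ
    have hβ0 : β = 0 := mdeg_eq_zero (by omega)
    rw [hβ0]; exact hG'0 j
  -- the "higher-order part"
  set P : Fin n → MvPolynomial (Fin n) k₀ := fun i => F i - X i with hPdef
  set P' : Fin n → MvPolynomial (Fin n) k := fun i => F' i - X i with hP'def
  have hmapP : ∀ i, MvPolynomial.map φ (P i) = P' i := by
    intro i
    simp only [hPdef, hP'def, map_sub, map_X]
    rfl
  have hVanP' : ∀ i, Van (P' i) 2 := by
    intro i β hβ
    have hβ1 : mdeg β ≤ 1 := by omega
    simp only [hP'def, coeff_sub]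
    rw [hAff' i β hβ1, sub_self]
  have hG'eq : ∀ j, G' j = X j - MvPolynomial.bind₁ G' (P' j) := by
    intro j
    have h := hGF' j
    have hFj : F' j = X j + P' j := by simp [hP'def]
    rw [hFj, map_add, bind₁_X_right] at h
    linear_combination h
  -- iteration over k₀ approximating the inverse
  let Hs : ℕ → Fin n → MvPolynomial (Fin n) k₀ :=
    fun t => Nat.rec (fun i => X i) (fun _ prev i => X i - MvPolynomial.bind₁ prev (P i)) t
  have key : ∀ t j, Van (MvPolynomial.map φ (Hs t j) - G' j) (t + 1) := by
    intro t
    induction t with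
    | zero =>
      intro j β hβ
      have hβ0 : β = 0 := mdeg_eq_zero (by omega)
      rw [hβ0]
      show coeff 0 (MvPolynomial.map φ (X j) - G' j) = 0
      rw [map_X, coeff_sub, coeff_zero_X, hG'0 j, sub_self]
    | succ t ih =>
      intro j
      have hA1 : ∀ i, Van (MvPolynomial.map φ (Hs t i)) 1 := by
        intro i β hβ
        have h1 := ih i β (by omega)
        rw [coeff_sub, sub_eq_zero] at h1
        rw [h1]
        exact hVanG'1 i β hβ
      have hstep : MvPolynomial.map φ (Hs (t + 1) j) - G' j
          = MvPolynomial.bind₁ G' (P' j)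
            - MvPolynomial.bind₁ (fun i => MvPolynomial.map φ (Hs t i)) (P' j) := by
        have h1 : Hs (t + 1) j = X j - MvPolynomial.bind₁ (Hs t) (P j) := rfl
        rw [h1, map_sub, map_X, map_bind₁, hmapP, hG'eq j]
        ring
      rw [hstep]
      have hAB : ∀ i, Van (G' i - MvPolynomial.map φ (Hs t i)) (t + 1) := by
        intro i
        have := Van_neg (ih i)
        rwa [neg_sub] at this
      exact Van_bind_sub (P' j) (hVanP' j) G' (fun i => MvPolynomial.map φ (Hs t i))
        hVanG'1 hA1 t hAB
  -- all coefficients of G' lie in the range of φ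
  have hrange : ∀ (j : Fin n) (β : Fin n →₀ ℕ), ∃ c : k₀, φ c = coeff β (G' j) := by
    intro j β
    have h := key (mdeg β) j β (by omega)
    rw [coeff_sub, sub_eq_zero] at h
    exact ⟨coeff β (Hs (mdeg β) j), (coeff_map φ (Hs (mdeg β) j) β).symm.trans h⟩
  choose g hg using hrange
  refine ⟨fun j => ∑ β ∈ (G' j).support, MvPolynomial.monomial β (g j β), ?_, ?_⟩ <;> intro i
  · apply MvPolynomial.map_injective φ φ.injective
    rw [map_bind₁, map_X]
    have hmapG : ∀ j, MvPolynomial.map φ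
        (∑ β ∈ (G' j).support, MvPolynomial.monomial β (g j β)) = G' j := by
      intro j
      rw [map_sum]
      simp only [map_monomial, hg]
      exact support_sum_monomial_coeff (G' j)
    simp only [hmapG]
    exact hGF' i
  · apply MvPolynomial.map_injective φ φ.injective
    rw [map_bind₁, map_X]
    have hmapG : MvPolynomial.map φ
        (∑ β ∈ (G' i).support, MvPolynomial.monomial β (g i β)) = G' i := by
      rw [map_sum]
      simp only [map_monomial, hg]
      exact support_sum_monomial_coeff (G' i)
    rw [hmapG]
    exact hFG' i


end
end

section
/- Let k be a field of characteristic p, let Λ = ℤ[x₁, x₂, …] be the polynomial ring over ℤ in countably infinitely many variables, and let τ : Λ → k be a surjective ring homomorphism. If F ∈ ME_n(Λ) has degree ≤ d, affine part identity, and det(Jac(F)) = 1, then π(F) ∈ ME_n(k) is a strong Keller map over k. -/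
open MvPolynomial

noncomputable section

section Aux

variable {n d : ℕ}

lemma mdeg_eq_sum {α : Fin n →₀ ℕ} : mdeg α = ∑ j, α j := by
  rw [mdeg, Finsupp.sum_fintype]; intro; rfl

lemma apply_le_mdeg (α : Fin n →₀ ℕ) (j : Fin n) : α j ≤ mdeg α := by
  rw [mdeg_eq_sum]
  exact Finset.single_le_sum (fun _ _ => Nat.zero_le _) (Finset.mem_univ j)

lemma mem_midxSet {β : Fin n →₀ ℕ} :
    β ∈ midxSet n d ↔ 2 ≤ mdeg β ∧ mdeg β ≤ d := by
  rw [midxSet, Finset.mem_filter, Finset.mem_Iic, and_iff_right_iff_imp]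
  rintro ⟨h2, hd⟩ j
  simpa using (apply_le_mdeg β j).trans hd

lemma map_jacDet {R S : Type*} [CommRing R] [CommRing S] (φ : R →+* S)
    (F : Fin n → MvPolynomial (Fin n) R) :
    jacDet (fun i => MvPolynomial.map φ (F i)) = MvPolynomial.map φ (jacDet F) := by
  rw [jacDet, jacDet, RingHom.map_det]
  congr 1
  ext i j
  simp [Matrix.map_apply, MvPolynomial.pderiv_map]

lemma map_psi_univ {R : Type*} [CommRing R] (F : Fin n → MvPolynomial (Fin n) R)
    (hdeg : DegLE F d) (haff : AffinePartId F) (i : Fin n) :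
    MvPolynomial.map (psi d F) (univFZ n d i) = F i := by
  classical
  ext β
  rw [MvPolynomial.coeff_map, univFZ, MvPolynomial.coeff_add, MvPolynomial.coeff_sum]
  simp only [MvPolynomial.coeff_monomial]
  by_cases h1 : mdeg β ≤ 1
  · have hsum : (∑ α ∈ (midxSet n d).attach,
        if (α : Fin n →₀ ℕ) = β then
          (MvPolynomial.X (⟨i, ⟨α.1, by
            have h := α.2; simp only [midxSet, Finset.mem_filter] at h; exact h.2⟩⟩ : Idx n d) :
            MvPolynomial (Idx n d) ℤ) else 0) = 0 := by
      refine Finset.sum_eq_zero fun α _ => ?_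
      rw [if_neg]
      intro hαβ
      have h2 := (mem_midxSet.mp α.2).1
      rw [hαβ] at h2; omega
    rw [hsum, add_zero, haff i β h1]
    rw [MvPolynomial.coeff_X', MvPolynomial.coeff_X']
    split_ifs <;> simp
  · push_neg at h1
    have hX : MvPolynomial.coeff β (MvPolynomial.X i : MvPolynomial (Fin n) (MvPolynomial (Idx n d) ℤ)) = 0 := by
      rw [MvPolynomial.coeff_X']
      rw [if_neg]
      intro hβ
      rw [← hβ] at h1
      simp [mdeg, Finsupp.sum_single_index] at h1
    rw [hX, zero_add]
    by_cases hd' : mdeg β ≤ d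
    · have hβmem : β ∈ midxSet n d := mem_midxSet.mpr ⟨h1, hd'⟩
      rw [Finset.sum_eq_single (⟨β, hβmem⟩ : {x // x ∈ midxSet n d})]
      · rw [if_pos rfl]
        simp [psi, MvPolynomial.eval₂Hom_X']
      · intro α _ hne
        rw [if_neg]
        intro hαβ
        exact hne (Subtype.ext hαβ)
      · intro h; exact absurd (Finset.mem_attach _ _) h
    · push_neg at hd'
      have hsum : (∑ α ∈ (midxSet n d).attach,
          if (α : Fin n →₀ ℕ) = β then
            (MvPolynomial.X (⟨i, ⟨α.1, by
              have h := α.2; simp only [midxSet, Finset.mem_filter] at h; exact h.2⟩⟩ : Idx n d) :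
              MvPolynomial (Idx n d) ℤ) else 0) = 0 := by
        refine Finset.sum_eq_zero fun α _ => ?_
        rw [if_neg]
        intro hαβ
        have h2 := (mem_midxSet.mp α.2).2
        rw [hαβ] at h2; omega
      rw [hsum, map_zero]
      by_contra hne
      have : β ∈ (F i).support := MvPolynomial.mem_support_iff.mpr fun h => hne h.symm
      have := MvPolynomial.le_totalDegree this
      have := hdeg i
      rw [mdeg] at hd'
      omega

lemma psi_Ecoef_eq_zero {R : Type*} [CommRing R] (F : Fin n → MvPolynomial (Fin n) R)
    (hdeg : DegLE F d) (haff : AffinePartId F) (hK : jacDet F = 1) (β : Fin n →₀ ℕ) :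
    psi d F (Ecoef n d β) = 0 := by
  have h1 : MvPolynomial.map (psi d F) (jacDet (univFZ n d) - 1) = 0 := by
    rw [map_sub, ← map_jacDet]
    have : (fun i => MvPolynomial.map (psi d F) (univFZ n d i)) = F := by
      funext i; exact map_psi_univ F hdeg haff i
    rw [this, hK]; simp
  have := congrArg (MvPolynomial.coeff β) h1
  rw [MvPolynomial.coeff_map, MvPolynomial.coeff_zero] at this
  unfold Ecoef
  exact this

end Aux

/-- Let `τ : Λ = ℤ[x₁,x₂,…] → k` be surjective onto a field of
characteristic `p`. If `F ∈ ME_n(Λ)` has degree ≤ d, affine part identity and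
`det(Jac(F)) = 1`, then `π(F)` is a strong Keller map over `k`. -/
theorem image_of_keller_is_strong_keller (n d p : ℕ) (hn : 1 ≤ n) (hd : 2 ≤ d) (hp : p.Prime)
    (k : Type*) [Field k] [CharP k p]
    (τ : MvPolynomial ℕ ℤ →+* k) (hτ : Function.Surjective τ)
    (F : Fin n → MvPolynomial (Fin n) (MvPolynomial ℕ ℤ))
    (hdeg : DegLE F d) (haff : AffinePartId F) (hK : jacDet F = 1) :
    IsSKE n d (fun i => MvPolynomial.map τ (F i)) := by
  intro Q hQ
  -- psi of mapped F equals τ ∘ psi F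
  have hcomp : psi d (fun i => MvPolynomial.map τ (F i)) = τ.comp (psi d F) := by
    apply MvPolynomial.ringHom_ext
    · intro r; simp [psi]
    · intro v; simp [psi, MvPolynomial.eval₂Hom_X', MvPolynomial.coeff_map]
  rw [hcomp, RingHom.comp_apply]
  suffices h : psi d F Q = 0 by rw [h, map_zero]
  -- set up fraction field
  set Λ := MvPolynomial ℕ ℤ
  let K := FractionRing Λ
  let ι : Λ →+* K := algebraMap Λ K
  have hι : Function.Injective ι := IsFractionRing.injective Λ K
  let ψQ : MvPolynomial (Idx n d) ℚ →+* K :=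
    MvPolynomial.eval₂Hom ((Rat.castHom K)) fun v => ι (MvPolynomial.coeff v.2.1 (F v.1))
  have hfac : ψQ.comp (toQ n d) = ι.comp (psi d F) := by
    apply MvPolynomial.ringHom_ext
    · intro r
      simp [ψQ, toQ, psi]
    · intro v
      simp [ψQ, toQ, psi, MvPolynomial.eval₂Hom_X']
  have hker : Iqd n d ≤ RingHom.ker ψQ := by
    rw [Iqd, Ideal.span_le]
    rintro _ ⟨β, rfl⟩
    rw [SetLike.mem_coe, RingHom.mem_ker, ← RingHom.comp_apply, hfac, RingHom.comp_apply,
      psi_Ecoef_eq_zero F hdeg haff hK β, map_zero]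
  have hprime : (RingHom.ker ψQ).IsPrime := RingHom.ker_isPrime ψQ
  have hrad : (Iqd n d).radical ≤ RingHom.ker ψQ := by
    calc (Iqd n d).radical ≤ (RingHom.ker ψQ).radical := Ideal.radical_mono hker
    _ = RingHom.ker ψQ := hprime.radical
  have hQ' : toQ n d Q ∈ RingHom.ker ψQ := hrad hQ
  rw [RingHom.mem_ker, ← RingHom.comp_apply, hfac, RingHom.comp_apply] at hQ'
  exact hι (by rwa [map_zero])


end
end
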